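/- Let L ∈ ℝ^{m×n} have rank r and let L̃ = L + E satisfy ‖E‖₂ ≤ (1/2)σ_min(L), where σ_min denotes the smallest nonzero singular value. Let L̃ = W̃ Σ̃ Ṽᵀ be a compact SVD of L̃ restricted to its top r singular values (L̃ having rank ≥ r). Let J ⊆ [n] with |J| = r, set C = L(:,J) and C̃ = W̃ Σ̃ (Ṽ(J,:))ᵀ, and assume (i) ‖C − C̃‖₂ ≤ (1/8)√(|J|/(rn)) σ_min(L), and (ii) ‖(Ṽ(J,:))†‖₂ ≤ √(rn/|J|) and both C and C̃ have rank r. Then ‖(V(J,:))†‖₂ ≤ 4 κ(L) √(rn/|J|), where V is the matrix of right singular vectors of L. -/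

import Mathlib

open Matrix BigOperators MeasureTheory

noncomputable def specNorm {m n : ℕ} (A : Matrix (Fin m) (Fin n) ℝ) : ℝ :=
  ‖LinearMap.toContinuousLinearMap (Matrix.toEuclideanLin A)‖

def IsMPInv {m n : ℕ} (A : Matrix (Fin m) (Fin n) ℝ) (B : Matrix (Fin n) (Fin m) ℝ) : Prop :=
  A * B * A = A ∧ B * A * B = B ∧ (A * B)ᵀ = A * B ∧ (B * A)ᵀ = B * A

noncomputable def rowNorm {m n : ℕ} (A : Matrix (Fin m) (Fin n) ℝ) (i : Fin m) : ℝ :=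
  Real.sqrt (∑ j, (A i j) ^ 2)

noncomputable def entryMax {m n : ℕ} (A : Matrix (Fin m) (Fin n) ℝ) : ℝ :=
  ⨆ i, ⨆ j, |A i j|

/-!
Weyl's inequality gives `σ̃ᵢ ≥ σ_min - ‖E‖ ≥ σ_min / 2`; it is proved by the Courant–Fischer
dimension count: `L + E` stretches every vector of `range V` (dimension `r`) by at least
`σ_min - ‖E‖` and every vector of `ℝ Ṽeᵢ ⊔ (range Ṽ)ᗮ` (dimension `n - r + 1`) by at most `σ̃ᵢ`,
and these subspaces meet.

Since `C = W Σ V_Jᵀ` and `C̃ = W̃ Σ̃ Ṽ_Jᵀ` have rank `r`, the square matrices `V_J`, `Ṽ_J` are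
invertible, and `C† = V_J⁻ᵀ Σ⁻¹ Wᵀ`, `C̃† = Ṽ_J⁻ᵀ Σ̃⁻¹ W̃ᵀ`. Hence
`‖C̃†‖ ≤ 2 √(rn/|J|) / σ_min`, hypothesis (i) makes `‖C̃†‖ ‖C - C̃‖ ≤ 1/4`, and Stewart's bound
yields `‖C†‖ ≤ 2 ‖C̃†‖`. Finally `V_J⁻ᵀ = C† W Σ`, so `‖V_J†‖ ≤ σ_max ‖C†‖`.
-/

open scoped Matrix.Norms.L2Operator
open Module

namespace Matrix

variable {l m n : Type*} [Fintype n] [DecidableEq n]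

lemma toEuclideanLin_mul_apply [Fintype l] [DecidableEq l] (A : Matrix m n ℝ) (B : Matrix n l ℝ)
    (x : EuclideanSpace ℝ l) :
    toEuclideanLin (A * B) x = toEuclideanLin A (toEuclideanLin B x) := by
  simp

lemma inner_toEuclideanLin_left [Fintype m] [DecidableEq m] (A : Matrix m n ℝ)
    (x : EuclideanSpace ℝ n) (y : EuclideanSpace ℝ m) :
    inner ℝ (toEuclideanLin A x) y = inner ℝ x (toEuclideanLin Aᵀ y) := by
  rw [← conjTranspose_eq_transpose_of_trivial, toEuclideanLin_conjTranspose_eq_adjoint,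
    LinearMap.adjoint_inner_right]

lemma norm_toEuclideanLin_le [Fintype m] (A : Matrix m n ℝ) (x : EuclideanSpace ℝ n) :
    ‖toEuclideanLin A x‖ ≤ ‖A‖ * ‖x‖ :=
  (LinearMap.toContinuousLinearMap (toEuclideanLin A)).le_opNorm x

lemma norm_toEuclideanLin_of_transpose_mul_self [Fintype m] [DecidableEq m] {W : Matrix m n ℝ}
    (hW : Wᵀ * W = 1) (x : EuclideanSpace ℝ n) : ‖toEuclideanLin W x‖ = ‖x‖ := by
  refine (pow_left_inj₀ (norm_nonneg _) (norm_nonneg _) two_ne_zero).mp ?_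
  rw [← real_inner_self_eq_norm_sq, ← real_inner_self_eq_norm_sq, inner_toEuclideanLin_left,
    ← toEuclideanLin_mul_apply, hW]
  simp

lemma toEuclideanLin_transpose_eq_zero_of_mem_orthogonal [Fintype m] [DecidableEq m]
    {V : Matrix m n ℝ} {w : EuclideanSpace ℝ m} (hw : w ∈ (LinearMap.range (toEuclideanLin V))ᗮ) :
    toEuclideanLin Vᵀ w = 0 := by
  rw [← inner_self_eq_zero (𝕜 := ℝ), inner_toEuclideanLin_left, transpose_transpose]
  exact Submodule.inner_left_of_mem_orthogonal (LinearMap.mem_range_self _ _) hw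

lemma toEuclideanLin_diagonal_single (d : n → ℝ) (i : n) :
    toEuclideanLin (diagonal d) (EuclideanSpace.single i 1) = d i • EuclideanSpace.single i 1 := by
  ext j
  simp [toLpLin_apply]

lemma l2_opNorm_le_one_of_transpose_mul_self [Fintype m] [DecidableEq m] {W : Matrix m n ℝ}
    (hW : Wᵀ * W = 1) : ‖W‖ ≤ 1 :=
  ContinuousLinearMap.opNorm_le_bound _ zero_le_one fun x => by
    rw [one_mul]; exact (norm_toEuclideanLin_of_transpose_mul_self hW x).le

lemma l2_opNorm_transpose [Fintype m] [DecidableEq m] (A : Matrix m n ℝ) : ‖Aᵀ‖ = ‖A‖ := by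
  rw [← conjTranspose_eq_transpose_of_trivial, l2_opNorm_conjTranspose]

lemma l2_opNorm_diagonal_le {d : n → ℝ} {c : ℝ} (hc : 0 ≤ c) (h : ∀ i, |d i| ≤ c) :
    ‖diagonal d‖ ≤ c := by
  rw [l2_opNorm_diagonal, pi_norm_le_iff_of_nonneg hc]
  exact h

lemma mul_norm_le_norm_toEuclideanLin_diagonal {d : n → ℝ} {c : ℝ} (hc : 0 ≤ c)
    (h : ∀ i, c ≤ |d i|) (x : EuclideanSpace ℝ n) :
    c * ‖x‖ ≤ ‖toEuclideanLin (diagonal d) x‖ := by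
  refine (sq_le_sq₀ (by positivity) (norm_nonneg _)).mp ?_
  rw [mul_pow, EuclideanSpace.norm_sq_eq, EuclideanSpace.norm_sq_eq, Finset.mul_sum]
  refine Finset.sum_le_sum fun i _ => ?_
  simp only [toLpLin_apply, mulVec_diagonal, Real.norm_eq_abs, abs_mul, mul_pow]
  gcongr
  exact h i

lemma isUnit_of_rank_eq_card {K : Type*} [Field K] {A : Matrix n n K}
    (h : A.rank = Fintype.card n) : IsUnit A := by
  rw [← mulVec_surjective_iff_isUnit, ← coe_mulVecLin, ← LinearMap.range_eq_top]
  exact Submodule.eq_top_of_finrank_eq (by rw [finrank_fintype_fun_eq_card]; exact h)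

lemma isUnit_det_of_rank_mul_transpose {K : Type*} [Field K] {A : Matrix m n K}
    {N : Matrix n n K} (h : (A * Nᵀ).rank = Fintype.card n) : IsUnit N.det := by
  rw [← det_transpose, ← isUnit_iff_isUnit_det]
  exact isUnit_of_rank_eq_card <| le_antisymm (by simpa using Nᵀ.rank_le_card_width)
    (h ▸ rank_mul_le_right A Nᵀ)

lemma finrank_range_toEuclideanLin_of_transpose_mul_self {ι : Type*} [Fintype ι] [DecidableEq ι]
    {V : Matrix n ι ℝ} (hV : Vᵀ * V = 1) :
    finrank ℝ (LinearMap.range (toEuclideanLin V)) = Fintype.card ι := by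
  rw [LinearMap.finrank_range_of_inj, finrank_euclideanSpace]
  intro x y hxy
  rw [← sub_eq_zero, ← norm_eq_zero, ← norm_toEuclideanLin_of_transpose_mul_self hV, map_sub, hxy,
    sub_self, norm_zero]

end Matrix

open Matrix

lemma le_of_norm_bounds_on_submodules {E F : Type*} [NormedAddCommGroup E] [NormedSpace ℝ E]
    [FiniteDimensional ℝ E] [SeminormedAddCommGroup F] (T : E → F) {S U : Submodule ℝ E} {a b : ℝ}
    (hdim : finrank ℝ E < finrank ℝ S + finrank ℝ U)
    (hS : ∀ x ∈ S, a * ‖x‖ ≤ ‖T x‖) (hU : ∀ x ∈ U, ‖T x‖ ≤ b * ‖x‖) : a ≤ b := by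
  obtain ⟨x, ⟨hxS, hxU⟩, hx⟩ : ∃ x ∈ S ⊓ U, x ≠ 0 := by
    by_contra! h
    exact hdim.not_ge (Submodule.finrank_add_finrank_le_of_disjoint
      (Submodule.disjoint_def.mpr fun x hxS hxU => h x ⟨hxS, hxU⟩))
  exact le_of_mul_le_mul_right ((hS x hxS).trans (hU x hxU)) (norm_pos_iff.mpr hx)

lemma norm_le_two_mul_of_norm_sub_le {E : Type*} [SeminormedAddCommGroup E] {x y : E} {δ : ℝ}
    (h : ‖x - y‖ ≤ 2 * ‖x‖ * ‖y‖ * δ) (hδ : ‖y‖ * δ ≤ 1 / 4) : ‖x‖ ≤ 2 * ‖y‖ := by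
  nlinarith [norm_le_norm_add_norm_sub' x y, norm_nonneg x]

lemma sqrt_div_mul_sqrt_div_le_one (a b : ℝ) : √(a / b) * √(b / a) ≤ 1 := by
  rw [← inv_div a b, Real.sqrt_inv]
  exact mul_inv_le_one

section Weyl

variable {m n ι : Type*} [Fintype m] [DecidableEq m] [Fintype n] [DecidableEq n]
  [Fintype ι] [DecidableEq ι]

lemma mul_norm_le_norm_toEuclideanLin_svd_add {W : Matrix m ι ℝ} {V : Matrix n ι ℝ} {σ : ι → ℝ}
    {s : ℝ} (hW : Wᵀ * W = 1) (hV : Vᵀ * V = 1) (hs : 0 ≤ s) (hσ : ∀ i, s ≤ σ i)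
    (E : Matrix m n ℝ) {x : EuclideanSpace ℝ n} (hx : x ∈ LinearMap.range (toEuclideanLin V)) :
    (s - ‖E‖) * ‖x‖ ≤ ‖toEuclideanLin (W * diagonal σ * Vᵀ + E) x‖ := by
  obtain ⟨y, rfl⟩ := hx
  have hL : toEuclideanLin (W * diagonal σ * Vᵀ) (toEuclideanLin V y) =
      toEuclideanLin W (toEuclideanLin (diagonal σ) y) := by
    rw [← toEuclideanLin_mul_apply, Matrix.mul_assoc, hV, Matrix.mul_one, toEuclideanLin_mul_apply]
  have hD : s * ‖y‖ ≤ ‖toEuclideanLin (diagonal σ) y‖ :=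
    mul_norm_le_norm_toEuclideanLin_diagonal hs (fun i => (hσ i).trans (le_abs_self _)) y
  have hE := norm_toEuclideanLin_le E (toEuclideanLin V y)
  rw [map_add, LinearMap.add_apply, hL]
  rw [norm_toEuclideanLin_of_transpose_mul_self hV] at hE ⊢
  have := norm_sub_norm_le (toEuclideanLin W (toEuclideanLin (diagonal σ) y))
    (-toEuclideanLin E (toEuclideanLin V y))
  rw [sub_neg_eq_add, norm_neg, norm_toEuclideanLin_of_transpose_mul_self hW] at this
  linarith

lemma norm_toEuclideanLin_svd_add_le {Wt : Matrix m ι ℝ} {Vt : Matrix n ι ℝ} {σt : ι → ℝ}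
    {F : Matrix m n ℝ} (hWt : Wtᵀ * Wt = 1) (hVt : Vtᵀ * Vt = 1) (hWF : Wtᵀ * F = 0)
    (hFV : F * Vt = 0) {i : ι} (hF : ‖F‖ ≤ σt i) {x : EuclideanSpace ℝ n}
    (hx : x ∈ (ℝ ∙ toEuclideanLin Vt (EuclideanSpace.single i 1)) ⊔
      (LinearMap.range (toEuclideanLin Vt))ᗮ) :
    ‖toEuclideanLin (Wt * diagonal σt * Vtᵀ + F) x‖ ≤ σt i * ‖x‖ := by
  obtain ⟨_, hz, w, hw, rfl⟩ := Submodule.mem_sup.mp hx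
  obtain ⟨a, rfl⟩ := Submodule.mem_span_singleton.mp hz
  set e : EuclideanSpace ℝ ι := EuclideanSpace.single i 1
  have hσ : 0 ≤ σt i := (norm_nonneg F).trans hF
  have hVtw := toEuclideanLin_transpose_eq_zero_of_mem_orthogonal hw
  have hTVt : (Wt * diagonal σt * Vtᵀ + F) * Vt = Wt * diagonal σt := by
    rw [Matrix.add_mul, hFV, add_zero, Matrix.mul_assoc, hVt, Matrix.mul_one]
  have hTx : toEuclideanLin (Wt * diagonal σt * Vtᵀ + F) (a • toEuclideanLin Vt e + w) =
      a • toEuclideanLin Wt (toEuclideanLin (diagonal σt) e) + toEuclideanLin F w := by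
    rw [map_add, map_smul, ← toEuclideanLin_mul_apply, hTVt, toEuclideanLin_mul_apply, map_add,
      LinearMap.add_apply, toEuclideanLin_mul_apply, hVtw, map_zero, zero_add]
  have hperpT : inner ℝ (a • toEuclideanLin Wt (toEuclideanLin (diagonal σt) e))
      (toEuclideanLin F w) = 0 := by
    rw [inner_smul_left, inner_toEuclideanLin_left, ← toEuclideanLin_mul_apply, hWF, map_zero,
      LinearMap.zero_apply, inner_zero_right, mul_zero]
  have hperpx : inner ℝ (a • toEuclideanLin Vt e) w = 0 := by
    rw [inner_smul_left, Submodule.inner_right_of_mem_orthogonal (LinearMap.mem_range_self _ _) hw,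
      mul_zero]
  have hDe : ‖toEuclideanLin (diagonal σt) e‖ = σt i := by
    simp [e, toEuclideanLin_diagonal_single, norm_smul, abs_of_nonneg hσ]
  have he : ‖toEuclideanLin Vt e‖ = 1 := by
    simp [e, norm_toEuclideanLin_of_transpose_mul_self hVt]
  have hFw : ‖toEuclideanLin F w‖ ≤ σt i * ‖w‖ :=
    (norm_toEuclideanLin_le F w).trans (by gcongr)
  refine (sq_le_sq₀ (norm_nonneg _) (by positivity)).mp ?_
  have hFw2 := pow_le_pow_left₀ (norm_nonneg _) hFw 2
  rw [hTx, mul_pow, norm_add_sq_real, norm_add_sq_real, hperpT, hperpx, norm_smul, norm_smul,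
    norm_toEuclideanLin_of_transpose_mul_self hWt, hDe, he]
  linarith

theorem sub_l2_opNorm_le_of_svd_add_eq {W Wt : Matrix m ι ℝ} {V Vt : Matrix n ι ℝ}
    {σ σt : ι → ℝ} {E F : Matrix m n ℝ} {s : ℝ} (hW : Wᵀ * W = 1) (hV : Vᵀ * V = 1) (hs : 0 ≤ s)
    (hσ : ∀ i, s ≤ σ i) (hWt : Wtᵀ * Wt = 1) (hVt : Vtᵀ * Vt = 1) (hWF : Wtᵀ * F = 0)
    (hFV : F * Vt = 0) (hF : ∀ i, ‖F‖ ≤ σt i)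
    (h : W * diagonal σ * Vᵀ + E = Wt * diagonal σt * Vtᵀ + F) (i : ι) :
    s - ‖E‖ ≤ σt i := by
  set K := LinearMap.range (toEuclideanLin Vt)
  set v := toEuclideanLin Vt (EuclideanSpace.single i 1)
  have hv : v ≠ 0 := by
    rw [← norm_ne_zero_iff, norm_toEuclideanLin_of_transpose_mul_self hVt]
    simp
  have hdisj : (ℝ ∙ v) ⊓ Kᗮ = ⊥ := disjoint_iff.mp <|
    (Submodule.orthogonal_disjoint K).mono_left
      ((Submodule.span_singleton_le_iff_mem _ _).mpr (LinearMap.mem_range_self _ _))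
  have hU := Submodule.finrank_sup_add_finrank_inf_eq (ℝ ∙ v) Kᗮ
  rw [hdisj, finrank_bot, finrank_span_singleton hv] at hU
  have hK := K.finrank_add_finrank_orthogonal
  rw [finrank_range_toEuclideanLin_of_transpose_mul_self hVt, finrank_euclideanSpace] at hK
  refine le_of_norm_bounds_on_submodules (toEuclideanLin (W * diagonal σ * Vᵀ + E))
    (S := LinearMap.range (toEuclideanLin V)) (U := (ℝ ∙ v) ⊔ Kᗮ) ?_
    (fun x hx => mul_norm_le_norm_toEuclideanLin_svd_add hW hV hs hσ E hx)
    (fun x hx => h ▸ norm_toEuclideanLin_svd_add_le hWt hVt hWF hFV (hF i) hx)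
  rw [finrank_range_toEuclideanLin_of_transpose_mul_self hV, finrank_euclideanSpace]
  omega

end Weyl

section PseudoInverse

variable {m n r : ℕ}

lemma specNorm_eq_l2_opNorm (A : Matrix (Fin m) (Fin n) ℝ) : specNorm A = ‖A‖ := rfl

lemma isMPInv_of_mul_eq_one {A : Matrix (Fin m) (Fin n) ℝ} {B : Matrix (Fin n) (Fin m) ℝ}
    (hBA : B * A = 1) (hAB : (A * B)ᵀ = A * B) : IsMPInv A B := by
  refine ⟨?_, ?_, hAB, by rw [hBA, transpose_one]⟩
  · rw [Matrix.mul_assoc, hBA, Matrix.mul_one]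
  · rw [hBA, Matrix.one_mul]

lemma isMPInv_nonsing_inv {A : Matrix (Fin n) (Fin n) ℝ} (hA : IsUnit A.det) : IsMPInv A A⁻¹ :=
  isMPInv_of_mul_eq_one (nonsing_inv_mul A hA) (by rw [mul_nonsing_inv A hA, transpose_one])

lemma IsMPInv.eq_nonsing_inv {A B : Matrix (Fin n) (Fin n) ℝ} (hB : IsMPInv A B)
    (hA : IsUnit A.det) : B = A⁻¹ := by
  calc B = A⁻¹ * (A * B * A) * A⁻¹ := by
        rw [Matrix.mul_assoc, Matrix.mul_assoc, mul_nonsing_inv A hA, Matrix.mul_one,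
          nonsing_inv_mul_cancel_left A B hA]
    _ = A⁻¹ := by rw [hB.1, nonsing_inv_mul A hA, Matrix.one_mul]

noncomputable def svdPinv (W : Matrix (Fin m) (Fin r) ℝ) (σ : Fin r → ℝ)
    (N : Matrix (Fin r) (Fin r) ℝ) : Matrix (Fin r) (Fin m) ℝ :=
  (N⁻¹)ᵀ * diagonal (fun i => (σ i)⁻¹) * Wᵀ

variable {W : Matrix (Fin m) (Fin r) ℝ} {σ : Fin r → ℝ} {N : Matrix (Fin r) (Fin r) ℝ}

lemma svdPinv_mul (hW : Wᵀ * W = 1) (hσ : ∀ i, σ i ≠ 0) :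
    svdPinv W σ N * (W * diagonal σ) = (N⁻¹)ᵀ := by
  have hD : diagonal (fun i => (σ i)⁻¹) * diagonal σ = 1 := by
    rw [diagonal_mul_diagonal, ← diagonal_one]
    exact congrArg diagonal (funext fun i => inv_mul_cancel₀ (hσ i))
  rw [svdPinv, Matrix.mul_assoc, ← Matrix.mul_assoc Wᵀ, hW, Matrix.one_mul, Matrix.mul_assoc, hD,
    Matrix.mul_one]

lemma isMPInv_svdPinv (hW : Wᵀ * W = 1) (hσ : ∀ i, σ i ≠ 0) (hN : IsUnit N.det) :
    IsMPInv (W * diagonal σ * Nᵀ) (svdPinv W σ N) := by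
  have hNN : (N⁻¹)ᵀ * Nᵀ = 1 := by rw [← transpose_mul, mul_nonsing_inv N hN, transpose_one]
  have hNN' : Nᵀ * (N⁻¹)ᵀ = 1 := by rw [← transpose_mul, nonsing_inv_mul N hN, transpose_one]
  have hD : diagonal σ * diagonal (fun i => (σ i)⁻¹) = 1 := by
    rw [diagonal_mul_diagonal, ← diagonal_one]
    exact congrArg diagonal (funext fun i => mul_inv_cancel₀ (hσ i))
  have hPQ : W * diagonal σ * Nᵀ * svdPinv W σ N = W * Wᵀ := by
    simp only [svdPinv, Matrix.mul_assoc]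
    rw [← Matrix.mul_assoc Nᵀ, hNN', Matrix.one_mul, ← Matrix.mul_assoc (diagonal σ), hD,
      Matrix.one_mul]
  refine isMPInv_of_mul_eq_one ?_ (by rw [hPQ, transpose_mul, transpose_transpose])
  rw [← Matrix.mul_assoc, svdPinv_mul hW hσ, hNN]

lemma l2_opNorm_svdPinv_le (hW : Wᵀ * W = 1) {c : ℝ} (hc : 0 < c) (hσ : ∀ i, c ≤ σ i) :
    ‖svdPinv W σ N‖ ≤ ‖N⁻¹‖ / c := by
  have hD : ‖diagonal (fun i => (σ i)⁻¹)‖ ≤ c⁻¹ :=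
    l2_opNorm_diagonal_le (inv_nonneg.mpr hc.le) fun i => by
      rw [abs_of_pos (inv_pos.mpr (hc.trans_le (hσ i)))]
      exact inv_anti₀ hc (hσ i)
  have hWt : ‖Wᵀ‖ ≤ 1 := (l2_opNorm_transpose W).trans_le (l2_opNorm_le_one_of_transpose_mul_self hW)
  calc ‖svdPinv W σ N‖ ≤ ‖(N⁻¹)ᵀ‖ * ‖diagonal (fun i => (σ i)⁻¹)‖ * ‖Wᵀ‖ :=
        (l2_opNorm_mul _ _).trans (mul_le_mul_of_nonneg_right (l2_opNorm_mul _ _) (norm_nonneg _))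
    _ ≤ ‖N⁻¹‖ * c⁻¹ * 1 := by
        rw [l2_opNorm_transpose]
        gcongr
    _ = ‖N⁻¹‖ / c := by rw [mul_one, div_eq_mul_inv]

lemma l2_opNorm_nonsing_inv_le (hW : Wᵀ * W = 1) (hσ : ∀ i, σ i ≠ 0) {c : ℝ} (hc : 0 ≤ c)
    (hσc : ∀ i, |σ i| ≤ c) : ‖N⁻¹‖ ≤ ‖svdPinv W σ N‖ * c := by
  calc ‖N⁻¹‖ = ‖svdPinv W σ N * (W * diagonal σ)‖ := by
        rw [svdPinv_mul hW hσ, l2_opNorm_transpose]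
    _ ≤ ‖svdPinv W σ N‖ * (‖W‖ * ‖diagonal σ‖) :=
        (l2_opNorm_mul _ _).trans (mul_le_mul_of_nonneg_left (l2_opNorm_mul _ _) (norm_nonneg _))
    _ ≤ ‖svdPinv W σ N‖ * (1 * c) := by
        gcongr
        exacts [l2_opNorm_le_one_of_transpose_mul_self hW, l2_opNorm_diagonal_le hc hσc]
    _ = ‖svdPinv W σ N‖ * c := by rw [one_mul]

end PseudoInverse

theorem stmt9_general (m n r k : ℕ)
    (L : Matrix (Fin m) (Fin n) ℝ)
    (W : Matrix (Fin m) (Fin r) ℝ) (σ : Fin r → ℝ) (V : Matrix (Fin n) (Fin r) ℝ)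
    (hW : Wᵀ * W = 1) (hV : Vᵀ * V = 1) (hσ : ∀ i, 0 < σ i)
    (hL : L = W * Matrix.diagonal σ * Vᵀ)
    (smin smax : ℝ)
    (hsmin : ∀ i, smin ≤ σ i) (hsmin' : ∃ i, σ i = smin)
    (hsmax : ∀ i, σ i ≤ smax) (hsmax' : ∃ i, σ i = smax)
    (E : Matrix (Fin m) (Fin n) ℝ) (hE : specNorm E ≤ smin / 2)
    (Wt : Matrix (Fin m) (Fin r) ℝ) (σt : Fin r → ℝ) (Vt : Matrix (Fin n) (Fin r) ℝ)
    (hWt : Wtᵀ * Wt = 1) (hVt : Vtᵀ * Vt = 1)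
    (F : Matrix (Fin m) (Fin n) ℝ)
    (hLt : L + E = Wt * Matrix.diagonal σt * Vtᵀ + F)
    (hWF : Wtᵀ * F = 0) (hFV : F * Vt = 0)
    (hFsmall : ∀ i, specNorm F ≤ σt i)
    (g : Fin k → Fin n) (hk : k = r)
    (C Ct : Matrix (Fin m) (Fin k) ℝ)
    (hC : C = L.submatrix id g)
    (hCt : Ct = Wt * Matrix.diagonal σt * (Vt.submatrix g id)ᵀ)
    (hCCt : specNorm (C - Ct) ≤ (1 / 8) * Real.sqrt ((k : ℝ) / (r * n)) * smin)
    (hVtJd : ∀ Bd : Matrix (Fin r) (Fin k) ℝ, IsMPInv (Vt.submatrix g id) Bd →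
      specNorm Bd ≤ Real.sqrt ((r : ℝ) * n / k))
    (hCrank : C.rank = r) (hCtrank : Ct.rank = r)
    (hStewart : ∀ (Cd Ctd : Matrix (Fin k) (Fin m) ℝ), IsMPInv C Cd → IsMPInv Ct Ctd →
      specNorm (Cd - Ctd) ≤ 2 * specNorm Cd * specNorm Ctd * specNorm (C - Ct)) :
    ∀ VJd : Matrix (Fin r) (Fin k) ℝ, IsMPInv (V.submatrix g id) VJd →
      specNorm VJd ≤ 4 * (smax / smin) * Real.sqrt ((r : ℝ) * n / k) := by
  subst hk
  intro VJd hVJd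
  simp only [specNorm_eq_l2_opNorm] at hE hFsmall hCCt hVtJd hStewart ⊢
  set VJ := V.submatrix g id
  set VtJ := Vt.submatrix g id
  set q := √((k : ℝ) * n / k)
  have hs : 0 < smin := by obtain ⟨i, rfl⟩ := hsmin'; exact hσ i
  have hsmax0 : 0 ≤ smax := by obtain ⟨i, rfl⟩ := hsmax'; exact (hσ i).le
  have hσt : ∀ i, smin / 2 ≤ σt i := fun i => by
    have := sub_l2_opNorm_le_of_svd_add_eq hW hV hs.le hsmin hWt hVt hWF hFV hFsmall (hL ▸ hLt) i
    linarith
  have hC' : C = W * diagonal σ * VJᵀ := by rw [hC, hL]; rfl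
  have hVJ : IsUnit VJ.det :=
    isUnit_det_of_rank_mul_transpose (by rw [← hC', hCrank, Fintype.card_fin])
  have hVtJ : IsUnit VtJ.det :=
    isUnit_det_of_rank_mul_transpose (by rw [← hCt, hCtrank, Fintype.card_fin])
  have hCd := hC' ▸ isMPInv_svdPinv hW (fun i => (hσ i).ne') hVJ
  have hCtd := hCt ▸ isMPInv_svdPinv hWt (fun i => ((half_pos hs).trans_le (hσt i)).ne') hVtJ
  have hCtd_norm : ‖svdPinv Wt σt VtJ‖ ≤ q / (smin / 2) :=
    (l2_opNorm_svdPinv_le hWt (half_pos hs) hσt).trans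
      (div_le_div_of_nonneg_right (hVtJd _ (isMPInv_nonsing_inv hVtJ)) (half_pos hs).le)
  have hsmall : ‖svdPinv Wt σt VtJ‖ * ‖C - Ct‖ ≤ 1 / 4 :=
    calc ‖svdPinv Wt σt VtJ‖ * ‖C - Ct‖
        ≤ q / (smin / 2) * (1 / 8 * √((k : ℝ) / (k * n)) * smin) := by gcongr
      _ = q * √((k : ℝ) / (k * n)) / 4 := by field_simp; ring
      _ ≤ 1 / 4 := by gcongr; exact sqrt_div_mul_sqrt_div_le_one _ _
  have hCd_norm := norm_le_two_mul_of_norm_sub_le (hStewart _ _ hCd hCtd) hsmall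
  rw [hVJd.eq_nonsing_inv hVJ]
  calc ‖VJ⁻¹‖ ≤ ‖svdPinv W σ VJ‖ * smax :=
        l2_opNorm_nonsing_inv_le hW (fun i => (hσ i).ne') hsmax0
          fun i => (abs_of_pos (hσ i)).trans_le (hsmax i)
    _ ≤ 2 * (q / (smin / 2)) * smax := by gcongr; linarith
    _ = 4 * (smax / smin) * q := by field_simp; ring

theorem stmt9 (m n r k : ℕ) (hr : 0 < r)
    (L : Matrix (Fin m) (Fin n) ℝ)
    (W : Matrix (Fin m) (Fin r) ℝ) (σ : Fin r → ℝ) (V : Matrix (Fin n) (Fin r) ℝ)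
    (hW : Wᵀ * W = 1) (hV : Vᵀ * V = 1) (hσ : ∀ i, 0 < σ i)
    (hL : L = W * Matrix.diagonal σ * Vᵀ)
    (hrank : L.rank = r)
    (smin smax : ℝ)
    (hsmin : ∀ i, smin ≤ σ i) (hsmin' : ∃ i, σ i = smin)
    (hsmax : ∀ i, σ i ≤ smax) (hsmax' : ∃ i, σ i = smax)
    (E : Matrix (Fin m) (Fin n) ℝ) (hE : specNorm E ≤ smin / 2)
    (Wt : Matrix (Fin m) (Fin r) ℝ) (σt : Fin r → ℝ) (Vt : Matrix (Fin n) (Fin r) ℝ)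
    (hWt : Wtᵀ * Wt = 1) (hVt : Vtᵀ * Vt = 1) (hσt : ∀ i, 0 < σt i)
    (F : Matrix (Fin m) (Fin n) ℝ)
    (hLt : L + E = Wt * Matrix.diagonal σt * Vtᵀ + F)
    (hWF : Wtᵀ * F = 0) (hFV : F * Vt = 0)
    (hFsmall : ∀ i, specNorm F ≤ σt i)
    (g : Fin k → Fin n) (hg : Function.Injective g) (hk : k = r)
    (C Ct : Matrix (Fin m) (Fin k) ℝ)
    (hC : C = L.submatrix id g)
    (hCt : Ct = Wt * Matrix.diagonal σt * (Vt.submatrix g id)ᵀ)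
    (hCCt : specNorm (C - Ct) ≤ (1 / 8) * Real.sqrt ((k : ℝ) / (r * n)) * smin)
    (hVtJd : ∀ Bd : Matrix (Fin r) (Fin k) ℝ, IsMPInv (Vt.submatrix g id) Bd →
      specNorm Bd ≤ Real.sqrt ((r : ℝ) * n / k))
    (hCrank : C.rank = r) (hCtrank : Ct.rank = r)
    (hStewart : ∀ (Cd Ctd : Matrix (Fin k) (Fin m) ℝ), IsMPInv C Cd → IsMPInv Ct Ctd →
      specNorm (Cd - Ctd) ≤ 2 * specNorm Cd * specNorm Ctd * specNorm (C - Ct)) :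
    ∀ VJd : Matrix (Fin r) (Fin k) ℝ, IsMPInv (V.submatrix g id) VJd →
      specNorm VJd ≤ 4 * (smax / smin) * Real.sqrt ((r : ℝ) * n / k) :=
  stmt9_general m n r k L W σ V hW hV hσ hL smin smax hsmin hsmin' hsmax hsmax' E hE Wt σt Vt hWt
    hVt F hLt hWF hFV hFsmall g hk C Ct hC hCt hCCt hVtJd hCrank hCtrank hStewart
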